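/- Under conditional independence of the variables given Y, the information-theoretic diversity 𝓘(U_S | Y) − 𝓘(U_S) equals −𝓘(U_S), and the set function S ↦ −𝓘(U_S) is submodular. -/

import Mathlib

open Finset

/-- Probability mass of the event `X = x` under a pmf `p` on a finite sample space. -/
noncomputable def pmassOf {Ω : Type*} [Fintype Ω] {γ : Type*} [DecidableEq γ]
    (p : Ω → ℝ) (X : Ω → γ) (x : γ) : ℝ :=
  ∑ ω, if X ω = x then p ω else 0

/-- Shannon entropy of a discrete random variable. -/
noncomputable def entOf {Ω : Type*} [Fintype Ω] {γ : Type*} [Fintype γ] [DecidableEq γ]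
    (p : Ω → ℝ) (X : Ω → γ) : ℝ :=
  -∑ x, pmassOf p X x * Real.log (pmassOf p X x)

/-- Conditional Shannon entropy H(X|Y) = H(X,Y) - H(Y). -/
noncomputable def condEntOf {Ω : Type*} [Fintype Ω] {γ δ : Type*}
    [Fintype γ] [DecidableEq γ] [Fintype δ] [DecidableEq δ]
    (p : Ω → ℝ) (X : Ω → γ) (Y : Ω → δ) : ℝ :=
  entOf p (fun ω => (X ω, Y ω)) - entOf p Y

/-- Mutual information I(X;Y) = H(X) + H(Y) - H(X,Y). -/
noncomputable def miOf {Ω : Type*} [Fintype Ω] {γ δ : Type*}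
    [Fintype γ] [DecidableEq γ] [Fintype δ] [DecidableEq δ]
    (p : Ω → ℝ) (X : Ω → γ) (Y : Ω → δ) : ℝ :=
  entOf p X + entOf p Y - entOf p (fun ω => (X ω, Y ω))

/-- Conditional mutual information I(X;Y|Z) = H(X|Z) + H(Y|Z) - H(X,Y|Z). -/
noncomputable def cmiOf {Ω : Type*} [Fintype Ω] {γ δ ε : Type*}
    [Fintype γ] [DecidableEq γ] [Fintype δ] [DecidableEq δ] [Fintype ε] [DecidableEq ε]
    (p : Ω → ℝ) (X : Ω → γ) (Y : Ω → δ) (Z : Ω → ε) : ℝ :=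
  condEntOf p X Z + condEntOf p Y Z - condEntOf p (fun ω => (X ω, Y ω)) Z

/-- Joint random variable of a finite family. -/
def jointFin {Ω : Type*} {γ : Type*} {k : ℕ} (U : Fin k → Ω → γ) : Ω → (Fin k → γ) :=
  fun ω i => U i ω

/-- Total correlation (multi-information) 𝓘(U₁,...,U_k) = ∑ H(Uᵢ) − H(U₁,...,U_k). -/
noncomputable def totalCorrFin {Ω : Type*} [Fintype Ω] {γ : Type*} [Fintype γ] [DecidableEq γ]
    {k : ℕ} (p : Ω → ℝ) (U : Fin k → Ω → γ) : ℝ :=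
  (∑ i, entOf p (U i)) - entOf p (jointFin U)

/-- Conditional total correlation 𝓘(U₁,...,U_k | Y) = ∑ H(Uᵢ|Y) − H(U₁,...,U_k|Y). -/
noncomputable def condTotalCorrFin {Ω : Type*} [Fintype Ω] {γ δ : Type*}
    [Fintype γ] [DecidableEq γ] [Fintype δ] [DecidableEq δ]
    {k : ℕ} (p : Ω → ℝ) (U : Fin k → Ω → γ) (Y : Ω → δ) : ℝ :=
  (∑ i, condEntOf p (U i) Y) - condEntOf p (jointFin U) Y

/-- Joint random variable of a subfamily indexed by a finite set. -/
def jointOn {Ω γ ι : Type*} (U : ι → Ω → γ) (S : Finset ι) : Ω → (S → γ) :=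
  fun ω i => U i.1 ω

/-- Total correlation of the subfamily indexed by `S`. -/
noncomputable def totalCorrOn {Ω γ ι : Type*} [Fintype Ω] [DecidableEq ι] [Fintype γ] [DecidableEq γ]
    (p : Ω → ℝ) (U : ι → Ω → γ) (S : Finset ι) : ℝ :=
  (∑ i ∈ S, entOf p (U i)) - entOf p (jointOn U S)

/-- Conditional total correlation of the subfamily indexed by `S`, given `Y`. -/
noncomputable def condTotalCorrOn {Ω γ δ ι : Type*} [Fintype Ω] [DecidableEq ι]
    [Fintype γ] [DecidableEq γ] [Fintype δ] [DecidableEq δ]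
    (p : Ω → ℝ) (U : ι → Ω → γ) (Y : Ω → δ) (S : Finset ι) : ℝ :=
  (∑ i ∈ S, condEntOf p (U i) Y) - condEntOf p (jointOn U S) Y

/-!
Conditional independence makes the chain rule for `H(U_S | Y)` telescope into `∑ i ∈ S, H(Uᵢ | Y)`,
so the conditional total correlation vanishes. For submodularity, `-𝓘(U_S)` is the joint entropy
`H(U_S)` minus the modular function `∑ i ∈ S, H(Uᵢ)`, and joint entropy is submodular:
`H(U_{A ∪ B}) + H(U_{A ∩ B}) ≤ H(U_A) + H(U_B)` is the nonnegativity of the conditional mutual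
information `I(U_A; U_B | U_{A ∩ B})`, an instance of Gibbs' inequality.
-/

lemma mul_log_sub_mul_log_le {a b : ℝ} (ha : 0 ≤ a) (hb : 0 ≤ b) (hab : 0 < a → 0 < b) :
    a * Real.log b - a * Real.log a ≤ b - a := by
  rcases ha.eq_or_lt with rfl | ha
  · simpa using hb
  have hb := hab ha
  have hlog := Real.log_le_sub_one_of_pos (div_pos hb ha)
  rw [Real.log_div hb.ne' ha.ne'] at hlog
  calc a * Real.log b - a * Real.log a = a * (Real.log b - Real.log a) := by ring
    _ ≤ a * (b / a - 1) := mul_le_mul_of_nonneg_left hlog ha.le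
    _ = b - a := by field_simp

lemma sum_mul_log_sub_le {κ : Type*} [Fintype κ] {P Q : κ → ℝ} (hP : ∀ t, 0 ≤ P t)
    (hQ : ∀ t, 0 ≤ Q t) (hPQ : ∀ t, 0 < P t → 0 < Q t) :
    ∑ t, P t * Real.log (Q t) - ∑ t, P t * Real.log (P t) ≤ ∑ t, Q t - ∑ t, P t := by
  rw [← sum_sub_distrib, ← sum_sub_distrib]
  exact sum_le_sum fun t _ => mul_log_sub_mul_log_le (hP t) (hQ t) (hPQ t)

section Entropy

variable {Ω γ δ ε : Type*} [Fintype Ω] [DecidableEq γ] [DecidableEq δ] [DecidableEq ε] (p : Ω → ℝ)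

lemma pmassOf_nonneg (hp : ∀ ω, 0 ≤ p ω) (X : Ω → γ) (x : γ) : 0 ≤ pmassOf p X x :=
  sum_nonneg fun ω _ => by split_ifs <;> simp [hp ω]

lemma sum_pmassOf_mul [Fintype γ] (X : Ω → γ) (g : γ → ℝ) :
    ∑ x, pmassOf p X x * g x = ∑ ω, p ω * g (X ω) := by
  simp only [pmassOf, sum_mul, ite_mul, zero_mul]
  rw [sum_comm]
  simp

lemma sum_pmassOf [Fintype γ] (X : Ω → γ) : ∑ x, pmassOf p X x = ∑ ω, p ω := by
  simpa using sum_pmassOf_mul p X 1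

lemma sum_pmassOf_prod_fst [Fintype γ] (X : Ω → γ) (Z : Ω → δ) (z : δ) :
    ∑ x, pmassOf p (fun ω => (X ω, Z ω)) (x, z) = pmassOf p Z z := by
  simp only [pmassOf, Prod.ext_iff]
  rw [sum_comm]
  simp [ite_and]

lemma pmassOf_le_pmassOf_comp (hp : ∀ ω, 0 ≤ p ω) (X : Ω → γ) (f : γ → δ) (x : γ) :
    pmassOf p X x ≤ pmassOf p (fun ω => f (X ω)) (f x) :=
  sum_le_sum fun ω _ => by
    by_cases h : X ω = x
    · simp [h]
    · rw [if_neg h]; split_ifs <;> simp [hp ω]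

lemma pmassOf_comp_of_injective (X : Ω → γ) {e : γ → δ} (he : Function.Injective e) (x : γ) :
    pmassOf p (fun ω => e (X ω)) (e x) = pmassOf p X x := by
  simp only [pmassOf, he.eq_iff]

/-- The law of `((X, W), Z)` under which `X` and `W` are conditionally independent given `Z`
(with `x / 0 = 0` it vanishes where `Z` has no mass). -/
noncomputable def condIndepMass (X : Ω → γ) (W : Ω → δ) (Z : Ω → ε) (t : (γ × δ) × ε) : ℝ :=
  pmassOf p (fun ω => (X ω, Z ω)) (t.1.1, t.2) * pmassOf p (fun ω => (W ω, Z ω)) (t.1.2, t.2) /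
    pmassOf p Z t.2

lemma condIndepMass_nonneg (hp : ∀ ω, 0 ≤ p ω) (X : Ω → γ) (W : Ω → δ) (Z : Ω → ε)
    (t : (γ × δ) × ε) : 0 ≤ condIndepMass p X W Z t :=
  div_nonneg (mul_nonneg (pmassOf_nonneg p hp _ _) (pmassOf_nonneg p hp _ _))
    (pmassOf_nonneg p hp _ _)

variable [Fintype γ] [Fintype δ] [Fintype ε]

lemma entOf_eq_neg_sum (X : Ω → γ) :
    entOf p X = -∑ ω, p ω * Real.log (pmassOf p X (X ω)) := by
  rw [entOf, sum_pmassOf_mul p X fun x => Real.log (pmassOf p X x)]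

lemma entOf_comp_eq_neg_sum (X : Ω → γ) (f : γ → δ) :
    entOf p (fun ω => f (X ω)) =
      -∑ x, pmassOf p X x * Real.log (pmassOf p (fun ω => f (X ω)) (f x)) := by
  rw [entOf_eq_neg_sum, sum_pmassOf_mul p X fun x => Real.log (pmassOf p (fun ω => f (X ω)) (f x))]

lemma entOf_comp_of_injective (X : Ω → γ) {e : γ → δ} (he : Function.Injective e) :
    entOf p (fun ω => e (X ω)) = entOf p X := by
  simp only [entOf_eq_neg_sum, pmassOf_comp_of_injective p X he]

lemma entOf_prod_comp_self (X : Ω → γ) (f : γ → δ) :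
    entOf p (fun ω => (X ω, f (X ω))) = entOf p X :=
  entOf_comp_of_injective p X (e := fun x => (x, f x)) fun _ _ h => (Prod.ext_iff.1 h).1

lemma entOf_prod_swap (X : Ω → γ) (Y : Ω → δ) :
    entOf p (fun ω => (Y ω, X ω)) = entOf p (fun ω => (X ω, Y ω)) :=
  entOf_comp_of_injective p (fun ω => (X ω, Y ω)) Prod.swap_injective

lemma condEntOf_comp_self (Y : Ω → δ) (f : δ → γ) : condEntOf p (fun ω => f (Y ω)) Y = 0 := by
  rw [condEntOf, entOf_prod_swap, entOf_prod_comp_self, sub_self]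

lemma sum_condIndepMass (X : Ω → γ) (W : Ω → δ) (Z : Ω → ε) :
    ∑ t, condIndepMass p X W Z t = ∑ ω, p ω :=
  calc ∑ t, condIndepMass p X W Z t
      = ∑ z, (∑ x, pmassOf p (fun ω => (X ω, Z ω)) (x, z)) *
          (∑ w, pmassOf p (fun ω => (W ω, Z ω)) (w, z)) / pmassOf p Z z := by
        rw [Fintype.sum_prod_type_right]
        simp only [condIndepMass, Fintype.sum_prod_type, sum_mul_sum, sum_div]
    _ = ∑ z, pmassOf p Z z := by simp only [sum_pmassOf_prod_fst, mul_self_div_self]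
    _ = ∑ ω, p ω := sum_pmassOf p Z

lemma cmiOf_nonneg (hp : ∀ ω, 0 ≤ p ω) (X : Ω → γ) (W : Ω → δ) (Z : Ω → ε) :
    0 ≤ cmiOf p X W Z := by
  let V : Ω → (γ × δ) × ε := fun ω => ((X ω, W ω), Z ω)
  let P := pmassOf p V
  let A : (γ × δ) × ε → ℝ := fun t => pmassOf p (fun ω => (X ω, Z ω)) (t.1.1, t.2)
  let B : (γ × δ) × ε → ℝ := fun t => pmassOf p (fun ω => (W ω, Z ω)) (t.1.2, t.2)
  let C : (γ × δ) × ε → ℝ := fun t => pmassOf p Z t.2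
  have hXZ : entOf p (fun ω => (X ω, Z ω)) = -∑ t, P t * Real.log (A t) :=
    entOf_comp_eq_neg_sum p V fun t : (γ × δ) × ε => (t.1.1, t.2)
  have hWZ : entOf p (fun ω => (W ω, Z ω)) = -∑ t, P t * Real.log (B t) :=
    entOf_comp_eq_neg_sum p V fun t : (γ × δ) × ε => (t.1.2, t.2)
  have hZ : entOf p Z = -∑ t, P t * Real.log (C t) :=
    entOf_comp_eq_neg_sum p V fun t : (γ × δ) × ε => t.2
  have hA t (ht : 0 < P t) : 0 < A t :=
    ht.trans_le (pmassOf_le_pmassOf_comp p hp V (fun t : (γ × δ) × ε => (t.1.1, t.2)) t)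
  have hB t (ht : 0 < P t) : 0 < B t :=
    ht.trans_le (pmassOf_le_pmassOf_comp p hp V (fun t : (γ × δ) × ε => (t.1.2, t.2)) t)
  have hC t (ht : 0 < P t) : 0 < C t :=
    ht.trans_le (pmassOf_le_pmassOf_comp p hp V (fun t : (γ × δ) × ε => t.2) t)
  have hlog t : P t * Real.log (condIndepMass p X W Z t) =
      P t * Real.log (A t) + P t * Real.log (B t) - P t * Real.log (C t) := by
    rcases (pmassOf_nonneg p hp V t).eq_or_lt with h | h
    · simp [P, ← h]
    rw [condIndepMass, Real.log_div (mul_pos (hA t h) (hB t h)).ne' (hC t h).ne',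
      Real.log_mul (hA t h).ne' (hB t h).ne']
    ring
  -- Gibbs' inequality for `P` against `condIndepMass`, which has the same total mass
  have gibbs := sum_mul_log_sub_le (P := P) (pmassOf_nonneg p hp V)
    (condIndepMass_nonneg p hp X W Z) fun t ht => div_pos (mul_pos (hA t ht) (hB t ht)) (hC t ht)
  have hV : entOf p V = -∑ t, P t * Real.log (P t) := rfl
  have hP : ∑ t, P t = ∑ ω, p ω := sum_pmassOf p V
  simp only [hlog, sum_sub_distrib, sum_add_distrib, sum_condIndepMass, hP] at gibbs
  rw [cmiOf, condEntOf, condEntOf, condEntOf]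
  change 0 ≤ entOf p (fun ω => (X ω, Z ω)) - entOf p Z + (entOf p (fun ω => (W ω, Z ω)) - entOf p Z)
    - (entOf p V - entOf p Z)
  rw [hXZ, hWZ, hZ, hV]
  linarith

lemma entOf_prod_add_entOf_le_of_comp (hp : ∀ ω, 0 ≤ p ω) (X : Ω → γ) (W : Ω → δ)
    (f : γ → ε) (g : δ → ε) (hfg : ∀ ω, f (X ω) = g (W ω)) :
    entOf p (fun ω => (X ω, W ω)) + entOf p (fun ω => f (X ω)) ≤ entOf p X + entOf p W := by
  have h := cmiOf_nonneg p hp X W (fun ω => f (X ω))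
  have hW : entOf p (fun ω => (W ω, f (X ω))) = entOf p W := by
    simp only [hfg]
    exact entOf_prod_comp_self p W g
  have hXW : entOf p (fun ω => ((X ω, W ω), f (X ω))) = entOf p (fun ω => (X ω, W ω)) :=
    entOf_prod_comp_self p (fun ω => (X ω, W ω)) fun xw => f xw.1
  rw [cmiOf, condEntOf, condEntOf, condEntOf, entOf_prod_comp_self, hW, hXW] at h
  linarith

end Entropy

lemma restrict₂_prod_injective {ι α : Type*} [DecidableEq ι] {A B T : Finset ι} (hA : A ⊆ T)
    (hB : B ⊆ T) (hT : T ⊆ A ∪ B) :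
    Function.Injective fun f : T → α =>
      (restrict₂ (π := fun _ => α) hA f, restrict₂ (π := fun _ => α) hB f) := by
  intro f g h
  obtain ⟨hfgA, hfgB⟩ := Prod.ext_iff.1 h
  funext ⟨i, hi⟩
  rcases mem_union.1 (hT hi) with hiA | hiB
  · exact congrFun hfgA ⟨i, hiA⟩
  · exact congrFun hfgB ⟨i, hiB⟩

lemma insert_restrict₂_injective {ι α : Type*} [DecidableEq ι] (u : ι) (S : Finset ι) :
    Function.Injective fun f : ↥(insert u S) → α =>
      (f ⟨u, mem_insert_self u S⟩, restrict₂ (π := fun _ => α) (subset_insert u S) f) := by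
  intro f g h
  obtain ⟨hfgu, hfgS⟩ := Prod.ext_iff.1 h
  funext ⟨i, hi⟩
  rcases mem_insert.1 hi with rfl | hiS
  · exact hfgu
  · exact congrFun hfgS ⟨i, hiS⟩

section Subfamilies

variable {Ω α ι : Type*} [Fintype Ω] [Fintype α] [DecidableEq α] [DecidableEq ι]
  (p : Ω → ℝ) (U : ι → Ω → α)

lemma entOf_jointOn_prod (A B : Finset ι) :
    entOf p (fun ω => (jointOn U A ω, jointOn U B ω)) = entOf p (jointOn U (A ∪ B)) :=
  entOf_comp_of_injective p (jointOn U (A ∪ B))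
    (e := fun f => (restrict₂ (π := fun _ => α) subset_union_left f,
      restrict₂ (π := fun _ => α) subset_union_right f))
    (restrict₂_prod_injective subset_union_left subset_union_right subset_rfl)

lemma entOf_jointOn_union_add_inter_le (hp : ∀ ω, 0 ≤ p ω) (A B : Finset ι) :
    entOf p (jointOn U (A ∪ B)) + entOf p (jointOn U (A ∩ B)) ≤
      entOf p (jointOn U A) + entOf p (jointOn U B) := by
  rw [← entOf_jointOn_prod]
  exact entOf_prod_add_entOf_le_of_comp p hp (jointOn U A) (jointOn U B)
    (restrict₂ (π := fun _ => α) inter_subset_left)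
    (restrict₂ (π := fun _ => α) inter_subset_right) fun _ => rfl

lemma neg_totalCorrOn_insert_sub_le (hp : ∀ ω, 0 ≤ p ω) {S T : Finset ι} {u : ι} (hST : S ⊆ T)
    (hu : u ∉ T) :
    (-totalCorrOn p U (insert u T)) - (-totalCorrOn p U T) ≤
      (-totalCorrOn p U (insert u S)) - (-totalCorrOn p U S) := by
  have h := entOf_jointOn_union_add_inter_le p U hp (insert u S) T
  rw [insert_union, union_eq_right.2 hST, insert_inter_of_notMem hu, inter_eq_left.2 hST] at h
  simp only [totalCorrOn, sum_insert hu, sum_insert fun huS => hu (hST huS)]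
  linarith

variable {β : Type*} [Fintype β] [DecidableEq β] (Y : Ω → β)

lemma condEntOf_jointOn_insert (u : ι) (S : Finset ι) :
    condEntOf p (jointOn U (insert u S)) Y =
      condEntOf p (U u) (fun ω => (Y ω, jointOn U S ω)) + condEntOf p (jointOn U S) Y := by
  have h : entOf p (fun ω => (U u ω, (Y ω, jointOn U S ω))) =
      entOf p (fun ω => (jointOn U (insert u S) ω, Y ω)) := by
    refine entOf_comp_of_injective p (fun ω => (jointOn U (insert u S) ω, Y ω))
      (e := fun fy => (fy.1 ⟨u, mem_insert_self u S⟩, fy.2,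
        restrict₂ (π := fun _ => α) (subset_insert u S) fy.1)) ?_
    intro a b hab
    simp only [Prod.ext_iff] at hab
    exact Prod.ext (insert_restrict₂_injective u S (Prod.ext hab.1 hab.2.2)) hab.2.1
  rw [condEntOf, condEntOf, condEntOf, ← h, entOf_prod_swap p (jointOn U S) Y]
  ring

lemma condTotalCorrOn_eq_zero
    (hci : ∀ (S : Finset ι) (u : ι), u ∉ S →
      condEntOf p (U u) (fun ω => (Y ω, jointOn U S ω)) = condEntOf p (U u) Y)
    (S : Finset ι) : condTotalCorrOn p U Y S = 0 := by
  induction S using Finset.induction_on with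
  | empty =>
    have h : jointOn U (∅ : Finset ι) = fun _ => isEmptyElim := Subsingleton.elim _ _
    rw [condTotalCorrOn, sum_empty, h, zero_sub, neg_eq_zero]
    exact condEntOf_comp_self p Y fun _ => (isEmptyElim : ↥(∅ : Finset ι) → α)
  | insert u S hu ih =>
    rw [condTotalCorrOn] at ih ⊢
    rw [sum_insert hu, condEntOf_jointOn_insert, hci S u hu]
    linarith

end Subfamilies

theorem diversity_eq_neg_totalCorr_and_submodular_general {Ω α β ι : Type*}
    [Fintype Ω] [DecidableEq ι]
    [Fintype α] [DecidableEq α] [Fintype β] [DecidableEq β]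
    (p : Ω → ℝ) (hp : ∀ ω, 0 ≤ p ω)
    (U : ι → Ω → α) (Y : Ω → β)
    (hci : ∀ (S : Finset ι) (u : ι), u ∉ S →
      condEntOf p (U u) (fun ω => (Y ω, jointOn U S ω)) = condEntOf p (U u) Y) :
    (∀ S : Finset ι,
      condTotalCorrOn p U Y S - totalCorrOn p U S = -totalCorrOn p U S) ∧
    (∀ (S T : Finset ι) (u : ι), S ⊆ T → u ∉ T →
      (-totalCorrOn p U (insert u T)) - (-totalCorrOn p U T) ≤
        (-totalCorrOn p U (insert u S)) - (-totalCorrOn p U S)) :=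
  ⟨fun S => by rw [condTotalCorrOn_eq_zero p U Y hci S, zero_sub],
    fun _ _ _ hST hu => neg_totalCorrOn_insert_sub_le p U hp hST hu⟩

/-- Under conditional independence given Y, the information-theoretic diversity
𝓘(U_S|Y) − 𝓘(U_S) equals −𝓘(U_S), and S ↦ −𝓘(U_S) is submodular. -/
theorem diversity_eq_neg_totalCorr_and_submodular {Ω α β ι : Type*}
    [Fintype Ω] [Fintype ι] [DecidableEq ι]
    [Fintype α] [DecidableEq α] [Fintype β] [DecidableEq β]
    (p : Ω → ℝ) (hp : ∀ ω, 0 ≤ p ω) (hp1 : ∑ ω, p ω = 1)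
    (U : ι → Ω → α) (Y : Ω → β)
    (hci : ∀ (S : Finset ι) (u : ι), u ∉ S →
      condEntOf p (U u) (fun ω => (Y ω, jointOn U S ω)) = condEntOf p (U u) Y) :
    (∀ S : Finset ι,
      condTotalCorrOn p U Y S - totalCorrOn p U S = -totalCorrOn p U S) ∧
    (∀ (S T : Finset ι) (u : ι), S ⊆ T → u ∉ T →
      (-totalCorrOn p U (insert u T)) - (-totalCorrOn p U T) ≤
        (-totalCorrOn p U (insert u S)) - (-totalCorrOn p U S)) :=
  diversity_eq_neg_totalCorr_and_submodular_general p hp U Y hci
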